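/- (Lieb concavity) Fix p ∈ (0,1) and an m×n complex matrix K. The map (A, B) ↦ Tr(K* A^p K B^{1−p}), defined for positive definite m×m matrices A and positive definite n×n matrices B, is jointly concave: for positive definite A₁, A₂, B₁, B₂ and t ∈ [0,1], Tr(K* (tA₁+(1−t)A₂)^p K (tB₁+(1−t)B₂)^{1−p}) ≥ t·Tr(K* A₁^p K B₁^{1−p}) + (1−t)·Tr(K* A₂^p K B₂^{1−p}). -/

import Mathlib

/-!
For `0 < p < 1` and `μ, ν > 0`, the substitution `s ↦ (ν / μ) s` gives
`∫₀^∞ s^(p-1) μν / (μ + sν) ds = c_p μ^p ν^(1-p)` with `c_p = ∫₀^∞ s^(p-1) / (1 + s) ds > 0`.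
In eigenbases of `A` and `B`, with `W = U* K V`, we have
`Tr(K* A^p K B^(1-p)) = Σ |W_ij|² μ_i^p ν_j^(1-p)`, hence
`c_p Tr(K* A^p K B^(1-p)) = ∫₀^∞ s^(p-1) G_s(A, B) ds` where
`G_s(A, B) = Σ |W_ij|² μ_i ν_j / (μ_i + s ν_j)`. Completing the square entrywise shows
`G_s(A, B) = min_Z Tr((K - Z)* (K - Z) B) + s⁻¹ Tr(Z* A Z)`, an infimum of functions that are
affine in `(A, B)`. So every `G_s` is jointly concave, and so is its integral against `s^(p-1) ds`.
-/

open Matrix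
open scoped ComplexOrder

/-- `matFun f A` is `f(A)` for a Hermitian matrix `A`, defined via the spectral
decomposition `A = U diag(λ) U*` as `U diag(f(λ)) U*` (and junk value `0` otherwise). -/
noncomputable def matFun {n : Type*} [Fintype n] [DecidableEq n]
    (f : ℝ → ℝ) (A : Matrix n n ℂ) : Matrix n n ℂ :=
  if hA : A.IsHermitian then
    (hA.eigenvectorUnitary : Matrix n n ℂ) *
      Matrix.diagonal (fun i => (f (hA.eigenvalues i) : ℂ)) *
      star (hA.eigenvectorUnitary : Matrix n n ℂ)
  else 0

open MeasureTheory Set Real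

section Scalar

variable {p : ℝ}

noncomputable def rpowKernelConst (p : ℝ) : ℝ := ∫ s in Ioi (0 : ℝ), s ^ (p - 1) / (1 + s)

lemma continuousOn_rpow_sub_one_div_one_add :
    ContinuousOn (fun s : ℝ => s ^ (p - 1) / (1 + s)) (Ioi 0) := by
  refine ContinuousOn.div (fun x hx => ?_) (by fun_prop) fun x hx => ?_
  · exact (continuousAt_rpow_const x _ (Or.inl (ne_of_gt hx))).continuousWithinAt
  · have : (0 : ℝ) < x := hx
    positivity

lemma integrableOn_rpow_sub_one_div_one_add (hp0 : 0 < p) (hp1 : p < 1) :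
    IntegrableOn (fun s : ℝ => s ^ (p - 1) / (1 + s)) (Ioi 0) := by
  have near_zero : IntegrableOn (fun s : ℝ => s ^ (p - 1) / (1 + s)) (Ioc 0 1) := by
    have dominating : IntegrableOn (fun s : ℝ => s ^ (p - 1)) (Ioc 0 1) := by
      have := intervalIntegral.intervalIntegrable_rpow' (r := p - 1) (by linarith)
        (a := 0) (b := 1)
      rwa [intervalIntegrable_iff, uIoc_of_le zero_le_one] at this
    refine dominating.mono' ((continuousOn_rpow_sub_one_div_one_add.mono
      Ioc_subset_Ioi_self).aestronglyMeasurable measurableSet_Ioc) ?_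
    filter_upwards [ae_restrict_mem measurableSet_Ioc] with x hx
    have hx0 : 0 < x := hx.1
    rw [norm_of_nonneg (by positivity)]
    exact div_le_self (rpow_nonneg hx0.le _) (by linarith)
  have near_infty : IntegrableOn (fun s : ℝ => s ^ (p - 1) / (1 + s)) (Ioi 1) := by
    have dominating : IntegrableOn (fun s : ℝ => s ^ (p - 2)) (Ioi 1) :=
      integrableOn_Ioi_rpow_of_lt (by linarith) one_pos
    refine dominating.mono' ((continuousOn_rpow_sub_one_div_one_add.mono
      (Ioi_subset_Ioi zero_le_one)).aestronglyMeasurable measurableSet_Ioi) ?_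
    filter_upwards [ae_restrict_mem measurableSet_Ioi] with x hx
    have hx0 : 0 < x := lt_trans zero_lt_one hx
    rw [norm_of_nonneg (by positivity)]
    calc x ^ (p - 1) / (1 + x) ≤ x ^ (p - 1) / x :=
          div_le_div_of_nonneg_left (by positivity) hx0 (by linarith)
      _ = x ^ (p - 2) := by rw [← rpow_sub_one hx0.ne']; ring_nf
  rw [← Ioc_union_Ioi_eq_Ioi zero_le_one]
  exact near_zero.union near_infty

lemma rpowKernelConst_pos (hp0 : 0 < p) (hp1 : p < 1) : 0 < rpowKernelConst p := by
  have hpos : ∀ s ∈ Ioi (0 : ℝ), 0 < s ^ (p - 1) / (1 + s) := fun s (hs : 0 < s) => by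
    positivity
  rw [rpowKernelConst, setIntegral_pos_iff_support_of_nonneg_ae
    ((ae_restrict_iff' measurableSet_Ioi).2 (.of_forall fun s hs => (hpos s hs).le))
    (integrableOn_rpow_sub_one_div_one_add hp0 hp1)]
  have hsub : Ioi (0 : ℝ) ⊆ Function.support (fun s : ℝ => s ^ (p - 1) / (1 + s)) ∩ Ioi 0 :=
    fun s hs => ⟨(hpos s hs).ne', hs⟩
  exact (by simp : (0 : ENNReal) < volume (Ioi (0 : ℝ))).trans_le (measure_mono hsub)

/-- The substitution `s ↦ (ν / μ) s` turns the integrand into the kernel of `rpowKernelConst`. -/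
lemma rpow_sub_one_mul_div_add_eq {μ ν s : ℝ} (hμ : 0 < μ) (hν : 0 < ν) (hs : 0 < s) :
    s ^ (p - 1) * (μ * ν / (μ + s * ν))
      = μ ^ p * ν ^ (1 - p) * (ν / μ * ((ν / μ * s) ^ (p - 1) / (1 + ν / μ * s))) := by
  have hc : 0 < ν / μ := div_pos hν hμ
  have hcp : ν / μ * (ν / μ) ^ (p - 1) = ν ^ p / μ ^ p := by
    rw [mul_comm, ← rpow_add_one hc.ne', sub_add_cancel, div_rpow hν.le hμ.le]
  have hνp : ν ^ (1 - p) * ν ^ p = ν := by rw [← rpow_add hν]; norm_num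
  have hc_mul : ν / μ * ((ν / μ * s) ^ (p - 1) / (1 + ν / μ * s))
      = ν ^ p / μ ^ p * s ^ (p - 1) / (1 + ν / μ * s) := by
    rw [mul_rpow hc.le hs.le, ← hcp]; ring
  rw [hc_mul]
  field_simp
  linear_combination -hνp

lemma integrableOn_rpow_sub_one_mul_div_add (hp0 : 0 < p) (hp1 : p < 1) {μ ν : ℝ}
    (hμ : 0 < μ) (hν : 0 < ν) :
    IntegrableOn (fun s : ℝ => s ^ (p - 1) * (μ * ν / (μ + s * ν))) (Ioi 0) := by
  refine (integrableOn_congr_fun (fun s hs => rpow_sub_one_mul_div_add_eq hμ hν hs)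
    measurableSet_Ioi).2 ((Integrable.const_mul ?_ _).const_mul _)
  have h := integrableOn_Ioi_comp_mul_left_iff (fun s : ℝ => s ^ (p - 1) / (1 + s)) 0
    (div_pos hν hμ)
  rw [mul_zero] at h
  exact h.2 (integrableOn_rpow_sub_one_div_one_add hp0 hp1)

lemma integral_rpow_sub_one_mul_div_add {μ ν : ℝ} (hμ : 0 < μ) (hν : 0 < ν) :
    ∫ s in Ioi (0 : ℝ), s ^ (p - 1) * (μ * ν / (μ + s * ν))
      = μ ^ p * ν ^ (1 - p) * rpowKernelConst p := by
  have hc : 0 < ν / μ := div_pos hν hμ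
  rw [setIntegral_congr_fun measurableSet_Ioi fun s hs => rpow_sub_one_mul_div_add_eq hμ hν hs,
    integral_const_mul, integral_const_mul]
  have := integral_comp_mul_left_Ioi (fun s : ℝ => s ^ (p - 1) / (1 + s)) 0 hc
  rw [mul_zero] at this
  rw [this, smul_eq_mul, rpowKernelConst, mul_inv_cancel_left₀ hc.ne']

/-- Completing the square in `z`. -/
lemma mul_normSq_sub_add_eq {μ ν s : ℝ} (hs : s ≠ 0) (hd : μ + s * ν ≠ 0) (w z : ℂ) :
    ν * Complex.normSq (w - z) + s⁻¹ * (μ * Complex.normSq z)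
      = Complex.normSq w * (μ * ν / (μ + s * ν))
        + (μ + s * ν) / s * Complex.normSq (z - ((s * ν / (μ + s * ν) : ℝ) : ℂ) * w) := by
  simp only [Complex.normSq_apply, Complex.sub_re, Complex.sub_im, Complex.mul_re,
    Complex.mul_im, Complex.ofReal_re, Complex.ofReal_im]
  have hd' : μ + ν * s ≠ 0 := by rwa [mul_comm]
  field_simp
  ring

end Scalar

section Spectral

variable {m n : Type*} [Fintype m] [DecidableEq m] [Fintype n] [DecidableEq n]

lemma matFun_eq_cfc {A : Matrix n n ℂ} (hA : A.IsHermitian) (f : ℝ → ℝ) :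
    matFun f A = cfc f A := by
  rw [matFun, dif_pos hA, hA.cfc_eq, IsHermitian.cfc, Unitary.conjStarAlgAut_apply]
  rfl

lemma matFun_const_one {A : Matrix n n ℂ} (hA : A.IsHermitian) :
    matFun (fun _ => 1) A = 1 := by
  rw [matFun_eq_cfc hA, cfc_const_one ℝ A]

lemma matFun_id {A : Matrix n n ℂ} (hA : A.IsHermitian) : matFun (fun x => x) A = A :=
  (matFun_eq_cfc hA _).trans (cfc_id' ℝ A hA)

lemma re_trace_conjTranspose_mul_diagonal_mul_mul_diagonal (W : Matrix m n ℂ) (d : m → ℝ)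
    (e : n → ℝ) :
    (Wᴴ * diagonal (fun i => (d i : ℂ)) * W * diagonal (fun j => (e j : ℂ))).trace.re
      = ∑ i, ∑ j, d i * e j * Complex.normSq (W i j) := by
  simp only [trace, diag_apply, mul_apply, diagonal_apply, conjTranspose_apply, mul_ite,
    mul_zero, Finset.sum_ite_eq', Finset.mem_univ, if_true, Complex.re_sum]
  rw [Finset.sum_comm]
  refine Finset.sum_congr rfl fun j _ => ?_
  rw [Finset.sum_mul, Complex.re_sum]
  refine Finset.sum_congr rfl fun i _ => ?_
  simp only [Complex.normSq_apply, Complex.mul_re, Complex.mul_im, Complex.star_def,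
    Complex.conj_re, Complex.conj_im, Complex.ofReal_re, Complex.ofReal_im]
  ring

noncomputable def eigenCoords {A : Matrix m m ℂ} {B : Matrix n n ℂ} (hA : A.IsHermitian)
    (hB : B.IsHermitian) (X : Matrix m n ℂ) : Matrix m n ℂ :=
  star (hA.eigenvectorUnitary : Matrix m m ℂ) * X * (hB.eigenvectorUnitary : Matrix n n ℂ)

variable {A : Matrix m m ℂ} {B : Matrix n n ℂ}

lemma eigenCoords_sub (hA : A.IsHermitian) (hB : B.IsHermitian) (X Y : Matrix m n ℂ) :
    eigenCoords hA hB (X - Y) = eigenCoords hA hB X - eigenCoords hA hB Y := by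
  simp only [eigenCoords, Matrix.mul_sub, Matrix.sub_mul]

lemma eigenCoords_conj (hA : A.IsHermitian) (hB : B.IsHermitian) (M : Matrix m n ℂ) :
    eigenCoords hA hB ((hA.eigenvectorUnitary : Matrix m m ℂ) * M *
      star (hB.eigenvectorUnitary : Matrix n n ℂ)) = M := by
  simp only [eigenCoords, Matrix.mul_assoc, Unitary.coe_star_mul_self, Matrix.mul_one]
  simp only [← Matrix.mul_assoc, Unitary.coe_star_mul_self, Matrix.one_mul]

lemma re_trace_matFun_sandwich (hA : A.IsHermitian) (hB : B.IsHermitian) (f g : ℝ → ℝ)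
    (X : Matrix m n ℂ) :
    (Xᴴ * matFun f A * X * matFun g B).trace.re
      = ∑ i, ∑ j, f (hA.eigenvalues i) * g (hB.eigenvalues j)
          * Complex.normSq (eigenCoords hA hB X i j) := by
  rw [← re_trace_conjTranspose_mul_diagonal_mul_mul_diagonal, matFun, dif_pos hA, matFun,
    dif_pos hB, eigenCoords]
  generalize (hA.eigenvectorUnitary : Matrix m m ℂ) = U
  generalize (hB.eigenvectorUnitary : Matrix n n ℂ) = V
  generalize diagonal (fun i => (f (hA.eigenvalues i) : ℂ)) = D
  generalize diagonal (fun j => (g (hB.eigenvalues j) : ℂ)) = E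
  rw [show Xᴴ * (U * D * star U) * X * (V * E * star V)
      = Xᴴ * U * D * (star U * X * V) * E * star V by simp only [Matrix.mul_assoc],
    trace_mul_comm]
  simp only [star_eq_conjTranspose, conjTranspose_mul, conjTranspose_conjTranspose,
    Matrix.mul_assoc]

end Spectral

section Variational

lemma convex_posDef {n : Type*} [Fintype n] : Convex ℝ {A : Matrix n n ℂ | A.PosDef} := by
  intro A (hA : A.PosDef) B (hB : B.PosDef) a b ha hb hab
  rcases ha.eq_or_lt with rfl | ha
  · obtain rfl : b = 1 := by simpa using hab
    simpa using hB
  · exact (hA.smul ha).add_posSemidef (hB.posSemidef.smul hb)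

variable {m n : Type*} [Fintype m] [Fintype n]

noncomputable def liebQuadratic (K : Matrix m n ℂ) (s : ℝ) (A : Matrix m m ℂ)
    (B : Matrix n n ℂ) (Z : Matrix m n ℂ) : ℝ :=
  ((K - Z)ᴴ * (K - Z) * B).trace.re + s⁻¹ * (Zᴴ * A * Z).trace.re

noncomputable def liebMin (K : Matrix m n ℂ) (s : ℝ) (A : Matrix m m ℂ)
    (B : Matrix n n ℂ) : ℝ :=
  ⨅ Z, liebQuadratic K s A B Z

lemma liebQuadratic_smul_add (K : Matrix m n ℂ) (s a b : ℝ) (A₁ A₂ : Matrix m m ℂ)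
    (B₁ B₂ : Matrix n n ℂ) (Z : Matrix m n ℂ) :
    liebQuadratic K s (a • A₁ + b • A₂) (a • B₁ + b • B₂) Z
      = a * liebQuadratic K s A₁ B₁ Z + b * liebQuadratic K s A₂ B₂ Z := by
  simp only [liebQuadratic, Matrix.mul_add, Matrix.add_mul, Matrix.mul_smul, Matrix.smul_mul,
    trace_add, trace_smul, Complex.add_re, Complex.smul_re, smul_eq_mul]
  ring

variable [DecidableEq m] [DecidableEq n] {A : Matrix m m ℂ} {B : Matrix n n ℂ}

lemma liebQuadratic_eq_sum (hA : A.IsHermitian) (hB : B.IsHermitian) (K : Matrix m n ℂ)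
    (s : ℝ) (Z : Matrix m n ℂ) :
    liebQuadratic K s A B Z = ∑ i, ∑ j,
      (hB.eigenvalues j * Complex.normSq (eigenCoords hA hB K i j - eigenCoords hA hB Z i j)
        + s⁻¹ * (hA.eigenvalues i * Complex.normSq (eigenCoords hA hB Z i j))) := by
  have hKZ : (K - Z)ᴴ * (K - Z) * B
      = (K - Z)ᴴ * matFun (fun _ => 1) A * (K - Z) * matFun (fun x => x) B := by
    rw [matFun_const_one hA, matFun_id hB, Matrix.mul_one]
  have hZ : Zᴴ * A * Z = Zᴴ * matFun (fun x => x) A * Z * matFun (fun _ => 1) B := by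
    rw [matFun_const_one hB, matFun_id hA, Matrix.mul_one]
  rw [liebQuadratic, hKZ, hZ, re_trace_matFun_sandwich hA hB, re_trace_matFun_sandwich hA hB,
    Finset.mul_sum, ← Finset.sum_add_distrib]
  refine Finset.sum_congr rfl fun i _ => ?_
  rw [Finset.mul_sum, ← Finset.sum_add_distrib]
  refine Finset.sum_congr rfl fun j _ => ?_
  rw [eigenCoords_sub, Matrix.sub_apply]
  ring

lemma isLeast_liebQuadratic (hA : A.PosDef) (hB : B.PosDef) {s : ℝ} (hs : 0 < s)
    (K : Matrix m n ℂ) :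
    IsLeast (range (liebQuadratic K s A B)) (∑ i, ∑ j,
      Complex.normSq (eigenCoords hA.1 hB.1 K i j) * (hA.1.eigenvalues i * hB.1.eigenvalues j
        / (hA.1.eigenvalues i + s * hB.1.eigenvalues j))) := by
  have hμ : ∀ i, 0 < hA.1.eigenvalues i := hA.eigenvalues_pos
  have hν : ∀ j, 0 < hB.1.eigenvalues j := hB.eigenvalues_pos
  have completed i j (z : ℂ) :=
    mul_normSq_sub_add_eq hs.ne' (add_pos (hμ i) (mul_pos hs (hν j))).ne'
      (eigenCoords hA.1 hB.1 K i j) z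
  constructor
  · let M : Matrix m n ℂ := of fun i j => ((s * hB.1.eigenvalues j /
      (hA.1.eigenvalues i + s * hB.1.eigenvalues j) : ℝ) : ℂ) * eigenCoords hA.1 hB.1 K i j
    refine ⟨(hA.1.eigenvectorUnitary : Matrix m m ℂ) * M *
      star (hB.1.eigenvectorUnitary : Matrix n n ℂ), ?_⟩
    rw [liebQuadratic_eq_sum hA.1 hB.1, eigenCoords_conj]
    refine Finset.sum_congr rfl fun i _ => Finset.sum_congr rfl fun j _ => ?_
    rw [completed]
    simp only [M, of_apply, sub_self, map_zero, mul_zero, add_zero]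
  · rintro _ ⟨Z, rfl⟩
    rw [liebQuadratic_eq_sum hA.1 hB.1]
    refine Finset.sum_le_sum fun i _ => Finset.sum_le_sum fun j _ => ?_
    rw [completed]
    have := hμ i
    have := hν j
    exact le_add_of_nonneg_right (mul_nonneg (by positivity) (Complex.normSq_nonneg _))

lemma liebMin_eq (hA : A.PosDef) (hB : B.PosDef) {s : ℝ} (hs : 0 < s) (K : Matrix m n ℂ) :
    liebMin K s A B = ∑ i, ∑ j,
      Complex.normSq (eigenCoords hA.1 hB.1 K i j) * (hA.1.eigenvalues i * hB.1.eigenvalues j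
        / (hA.1.eigenvalues i + s * hB.1.eigenvalues j)) :=
  (isLeast_liebQuadratic hA hB hs K).csInf_eq

/-- An infimum of functions that are affine in `(A, B)`. -/
lemma concaveOn_liebMin {s : ℝ} (hs : 0 < s) (K : Matrix m n ℂ) :
    ConcaveOn ℝ ({A : Matrix m m ℂ | A.PosDef} ×ˢ {B : Matrix n n ℂ | B.PosDef})
      (fun x => liebMin K s x.1 x.2) := by
  refine ⟨convex_posDef.prod convex_posDef, ?_⟩
  rintro ⟨A₁, B₁⟩ ⟨hA₁, hB₁⟩ ⟨A₂, B₂⟩ ⟨hA₂, hB₂⟩ a b ha hb hab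
  obtain ⟨hA, hB⟩ : (a • A₁ + b • A₂).PosDef ∧ (a • B₁ + b • B₂).PosDef :=
    (convex_posDef.prod convex_posDef) (x := (A₁, B₁)) (y := (A₂, B₂)) ⟨hA₁, hB₁⟩ ⟨hA₂, hB₂⟩
      ha hb hab
  obtain ⟨Z, hZ⟩ := (isLeast_liebQuadratic hA hB hs K).1
  simp only [smul_eq_mul, Prod.smul_mk, Prod.mk_add_mk]
  rw [liebMin_eq hA hB hs, ← hZ, liebQuadratic_smul_add]
  gcongr
  · exact ciInf_le (isLeast_liebQuadratic hA₁ hB₁ hs K).bddBelow Z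
  · exact ciInf_le (isLeast_liebQuadratic hA₂ hB₂ hs K).bddBelow Z

end Variational

section Integral

variable {m n : Type*} [Fintype m] [DecidableEq m] [Fintype n] [DecidableEq n]
  {A : Matrix m m ℂ} {B : Matrix n n ℂ} {p : ℝ}

lemma eqOn_rpow_mul_liebMin (hA : A.PosDef) (hB : B.PosDef) (K : Matrix m n ℂ) :
    EqOn (fun s => s ^ (p - 1) * liebMin K s A B)
      (fun s => ∑ i, ∑ j, Complex.normSq (eigenCoords hA.1 hB.1 K i j) *
        (s ^ (p - 1) * (hA.1.eigenvalues i * hB.1.eigenvalues j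
          / (hA.1.eigenvalues i + s * hB.1.eigenvalues j)))) (Ioi 0) := by
  intro s hs
  simp only [liebMin_eq hA hB hs, Finset.mul_sum]
  exact Finset.sum_congr rfl fun i _ => Finset.sum_congr rfl fun j _ => by ring

lemma integral_rpow_mul_liebMin (hp0 : 0 < p) (hp1 : p < 1) (hA : A.PosDef) (hB : B.PosDef)
    (K : Matrix m n ℂ) :
    IntegrableOn (fun s => s ^ (p - 1) * liebMin K s A B) (Ioi 0) ∧
      ∫ s in Ioi (0 : ℝ), s ^ (p - 1) * liebMin K s A B
        = (Kᴴ * matFun (fun x => x ^ p) A * K * matFun (fun x => x ^ (1 - p)) B).trace.re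
          * rpowKernelConst p := by
  have term_integrable i j := ((integrableOn_rpow_sub_one_mul_div_add hp0 hp1
    (hA.eigenvalues_pos i) (hB.eigenvalues_pos j)).const_mul
      (Complex.normSq (eigenCoords hA.1 hB.1 K i j)))
  have row_integrable i := integrable_finsetSum Finset.univ fun j _ => term_integrable i j
  rw [integrableOn_congr_fun (eqOn_rpow_mul_liebMin hA hB K) measurableSet_Ioi,
    setIntegral_congr_fun measurableSet_Ioi (eqOn_rpow_mul_liebMin hA hB K),
    re_trace_matFun_sandwich hA.1 hB.1, Finset.sum_mul,
    integral_finsetSum _ fun i _ => row_integrable i]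
  refine ⟨integrable_finsetSum _ fun i _ => row_integrable i,
    Finset.sum_congr rfl fun i _ => ?_⟩
  rw [integral_finsetSum _ fun j _ => term_integrable i j, Finset.sum_mul]
  refine Finset.sum_congr rfl fun j _ => ?_
  rw [integral_const_mul, integral_rpow_sub_one_mul_div_add (hA.eigenvalues_pos i)
    (hB.eigenvalues_pos j)]
  ring

theorem concaveOn_re_trace_mul_matFun_rpow (hp0 : 0 < p) (hp1 : p < 1) (K : Matrix m n ℂ) :
    ConcaveOn ℝ ({A : Matrix m m ℂ | A.PosDef} ×ˢ {B : Matrix n n ℂ | B.PosDef})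
      (fun AB => (Kᴴ * matFun (fun x => x ^ p) AB.1 * K
        * matFun (fun x => x ^ (1 - p)) AB.2).trace.re) := by
  refine ⟨convex_posDef.prod convex_posDef, ?_⟩
  rintro x ⟨hA₁, hB₁⟩ y ⟨hA₂, hB₂⟩ a b ha hb hab
  obtain ⟨hA, hB⟩ := (convex_posDef.prod convex_posDef) ⟨hA₁, hB₁⟩ ⟨hA₂, hB₂⟩ ha hb hab
  obtain ⟨int₁, eq₁⟩ := integral_rpow_mul_liebMin hp0 hp1 hA₁ hB₁ K
  obtain ⟨int₂, eq₂⟩ := integral_rpow_mul_liebMin hp0 hp1 hA₂ hB₂ K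
  obtain ⟨int, eq⟩ := integral_rpow_mul_liebMin hp0 hp1 hA hB K
  rw [← mul_le_mul_iff_of_pos_right (rpowKernelConst_pos hp0 hp1), add_mul, smul_eq_mul,
    smul_eq_mul, mul_assoc, mul_assoc, ← eq₁, ← eq₂, ← eq, ← integral_const_mul,
    ← integral_const_mul, ← integral_add (int₁.const_mul a) (int₂.const_mul b)]
  refine setIntegral_mono_on ((int₁.const_mul a).add (int₂.const_mul b)) int measurableSet_Ioi
    fun s (hs : 0 < s) => ?_
  have := (concaveOn_liebMin hs K).2 ⟨hA₁, hB₁⟩ ⟨hA₂, hB₂⟩ ha hb hab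
  simp only [smul_eq_mul] at this
  calc a * (s ^ (p - 1) * liebMin K s x.1 x.2) + b * (s ^ (p - 1) * liebMin K s y.1 y.2)
      = s ^ (p - 1) * (a * liebMin K s x.1 x.2 + b * liebMin K s y.1 y.2) := by ring
    _ ≤ _ := mul_le_mul_of_nonneg_left this (by positivity)

end Integral

/-- **Lieb's concavity theorem.**  For `p ∈ (0,1)` and a fixed matrix `K`, the map
`(A, B) ↦ Tr(K* A^p K B^(1−p))` is jointly concave on pairs of positive definite
matrices.  (The traced expression is real; we take its real part.) -/
theorem lieb_concavity
    (p : ℝ) (hp0 : 0 < p) (hp1 : p < 1)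
    {m n : ℕ} (K : Matrix (Fin m) (Fin n) ℂ)
    (A₁ A₂ : Matrix (Fin m) (Fin m) ℂ) (B₁ B₂ : Matrix (Fin n) (Fin n) ℂ)
    (hA₁ : A₁.PosDef) (hA₂ : A₂.PosDef) (hB₁ : B₁.PosDef) (hB₂ : B₂.PosDef)
    (t : ℝ) (ht0 : 0 ≤ t) (ht1 : t ≤ 1) :
    (Kᴴ * matFun (fun x => x ^ p) (t • A₁ + (1 - t) • A₂) * K *
        matFun (fun x => x ^ (1 - p)) (t • B₁ + (1 - t) • B₂)).trace.re
      ≥ t * (Kᴴ * matFun (fun x => x ^ p) A₁ * K * matFun (fun x => x ^ (1 - p)) B₁).trace.re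
        + (1 - t) * (Kᴴ * matFun (fun x => x ^ p) A₂ * K *
            matFun (fun x => x ^ (1 - p)) B₂).trace.re :=
  (concaveOn_re_trace_mul_matFun_rpow hp0 hp1 K).2 (x := (A₁, B₁)) (y := (A₂, B₂))
    ⟨hA₁, hB₁⟩ ⟨hA₂, hB₂⟩ ht0 (sub_nonneg.2 ht1) (add_sub_cancel t 1)
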